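/- arXiv:2503.21134 — 4 statements merged into one kernel-verified Lean document; each statement's English description precedes it below -/
import Mathlib

section
/- (Observation O2, maximum rate.) For every integer D ≥ 1 and all reals ᾱ ≥ 0, β̄ ≥ 0, and every probability vector p on Fin D, R̄(p) ≤ R̄(u), where u is the uniform vector u i = 1/D; moreover R̄(u) = −(ᾱ+β̄)·log₂((ᾱ+β̄)/D) + (ᾱ + β̄/D)·log₂(ᾱ + β̄/D) + ((D−1)/D)·β̄·log₂(β̄/D). Hence the maximum of R̄ over the simplex equals this closed-form value R_max. -/
/-- `φ(x) = -x·log₂ x`, with the convention `0·log₂ 0 = 0`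
(note `Real.logb 2 0 = 0` in Mathlib, so this convention holds definitionally). -/
noncomputable def phi (x : ℝ) : ℝ := -x * Real.logb 2 x

/-- The rate function `R̄(p)` for parameters `ᾱ = abar`, `β̄ = bbar`. -/
noncomputable def Rbar (D : ℕ) (abar bbar : ℝ) (p : Fin D → ℝ) : ℝ :=
  (∑ i, phi (abar * p i + bbar / D))
    + (abar + bbar / D) * Real.logb 2 (abar + bbar / D)
    + ((D : ℝ) - 1) * (bbar / D) * Real.logb 2 (bbar / D)

lemma phi_eq (x : ℝ) : phi x = Real.negMulLog x / Real.log 2 := by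
  simp only [phi, Real.negMulLog, Real.logb]
  ring

/-- Observation O2: for every probability vector `p` on `Fin D`, `R̄(p) ≤ R̄(u)` where `u`
is the uniform vector, and `R̄(u)` equals the closed-form value `R_max`. -/
theorem stmt_1 (D : ℕ) (hD : 1 ≤ D) (abar bbar : ℝ) (ha : 0 ≤ abar) (hb : 0 ≤ bbar)
    (p : Fin D → ℝ) (hp : ∀ i, 0 ≤ p i) (hsum : ∑ i, p i = 1) :
    Rbar D abar bbar p ≤ Rbar D abar bbar (fun _ => 1 / D) ∧
    Rbar D abar bbar (fun _ => 1 / D) =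
      -(abar + bbar) * Real.logb 2 ((abar + bbar) / D)
        + (abar + bbar / D) * Real.logb 2 (abar + bbar / D)
        + ((D : ℝ) - 1) / D * bbar * Real.logb 2 (bbar / D) := by
  have hD0 : (0:ℝ) < D := by exact_mod_cast hD
  have hDne : (D:ℝ) ≠ 0 := ne_of_gt hD0
  have hmean : abar * (1 / (D:ℝ)) + bbar / D = (abar + bbar) / D := by ring
  constructor
  · unfold Rbar
    gcongr ?_ + _ + _
    -- Jensen
    have hjen : ∑ i : Fin D, (1/(D:ℝ)) • Real.negMulLog (abar * p i + bbar / D)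
        ≤ Real.negMulLog (∑ i : Fin D, (1/(D:ℝ)) • (abar * p i + bbar / D)) := by
      apply Real.concaveOn_negMulLog.le_map_sum
      · intro i _; positivity
      · simp only [Finset.sum_const, Finset.card_univ, Fintype.card_fin, nsmul_eq_mul]
        field_simp
      · intro i _
        have := hp i
        have : 0 ≤ abar * p i + bbar / D := by positivity
        simpa using this
    have hsum2 : ∑ i : Fin D, (1/(D:ℝ)) • (abar * p i + bbar / D) = (abar + bbar) / D := by
      simp only [smul_eq_mul]
      rw [← Finset.mul_sum, Finset.sum_add_distrib, ← Finset.mul_sum, hsum,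
        Finset.sum_const, Finset.card_univ, Fintype.card_fin, nsmul_eq_mul]
      field_simp
    rw [hsum2] at hjen
    have hlog2 : (0:ℝ) < Real.log 2 := Real.log_pos (by norm_num)
    calc ∑ i : Fin D, phi (abar * p i + bbar / D)
        = (∑ i : Fin D, (1/(D:ℝ)) • Real.negMulLog (abar * p i + bbar / D)) * D / Real.log 2 := by
          rw [Finset.sum_mul, Finset.sum_div]
          refine Finset.sum_congr rfl fun i _ => ?_
          rw [phi_eq, smul_eq_mul]
          field_simp
      _ ≤ Real.negMulLog ((abar + bbar) / D) * D / Real.log 2 := by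
          gcongr
      _ = ∑ i : Fin D, phi (abar * (1/(D:ℝ)) + bbar / D) := by
          rw [Finset.sum_const, Finset.card_univ, Fintype.card_fin, nsmul_eq_mul,
            phi_eq, hmean]
          ring
  · unfold Rbar
    rw [Finset.sum_const, Finset.card_univ, Fintype.card_fin, nsmul_eq_mul]
    simp only [phi, hmean]
    field_simp
end

section
/- (Observation O3, minimum detection error.) For every integer D ≥ 1, all reals π₁, π₂, α₁, α₂, β₁, β₂, γ₁, γ₂ ≥ 0, and every probability vector p on Fin D, P̲ₑ(p) ≥ min(π₁·(α₁+β₁/D), π₂·(α₂+β₂/D)) + ((D−1)/D)·min(π₁·β₁, π₂·β₂) + min(π₁·γ₁, π₂·γ₂), and equality holds when p is a standard basis vector (a point mass on a single coordinate). -/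
/-- `f_s(x) = π_s·α_s·x + π_s·β_s/D` for a channel state `s`. -/
noncomputable def f (D : ℕ) (pis alphas betas : ℝ) (x : ℝ) : ℝ :=
  pis * alphas * x + pis * betas / D

/-- The detection function `P̲ₑ(p) = ∑ i, min(f₁(p i), f₂(p i)) + min(π₁γ₁, π₂γ₂)`. -/
noncomputable def Pe (D : ℕ) (pi1 pi2 alpha1 alpha2 beta1 beta2 gamma1 gamma2 : ℝ)
    (p : Fin D → ℝ) : ℝ :=
  (∑ i, min (f D pi1 alpha1 beta1 (p i)) (f D pi2 alpha2 beta2 (p i)))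
    + min (pi1 * gamma1) (pi2 * gamma2)

/-- Observation O3: for every probability vector `p` on `Fin D`,
`P̲ₑ(p) ≥ min(π₁(α₁+β₁/D), π₂(α₂+β₂/D)) + ((D−1)/D)·min(π₁β₁, π₂β₂) + min(π₁γ₁, π₂γ₂)`,
with equality when `p` is a standard basis vector. -/
theorem stmt_4 (D : ℕ) (hD : 1 ≤ D) (pi1 pi2 alpha1 alpha2 beta1 beta2 gamma1 gamma2 : ℝ)
    (hpi1 : 0 ≤ pi1) (hpi2 : 0 ≤ pi2) (halpha1 : 0 ≤ alpha1) (halpha2 : 0 ≤ alpha2)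
    (hbeta1 : 0 ≤ beta1) (hbeta2 : 0 ≤ beta2) (hgamma1 : 0 ≤ gamma1) (hgamma2 : 0 ≤ gamma2)
    (p : Fin D → ℝ) (hp : ∀ i, 0 ≤ p i) (hsum : ∑ i, p i = 1) :
    (Pe D pi1 pi2 alpha1 alpha2 beta1 beta2 gamma1 gamma2 p ≥
      min (pi1 * (alpha1 + beta1 / D)) (pi2 * (alpha2 + beta2 / D))
        + ((D : ℝ) - 1) / D * min (pi1 * beta1) (pi2 * beta2)
        + min (pi1 * gamma1) (pi2 * gamma2)) ∧
    (∀ j : Fin D,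
      Pe D pi1 pi2 alpha1 alpha2 beta1 beta2 gamma1 gamma2 (fun i => if i = j then 1 else 0) =
        min (pi1 * (alpha1 + beta1 / D)) (pi2 * (alpha2 + beta2 / D))
          + ((D : ℝ) - 1) / D * min (pi1 * beta1) (pi2 * beta2)
          + min (pi1 * gamma1) (pi2 * gamma2)) := by
  have hD0 : (0:ℝ) < (D:ℝ) := by exact_mod_cast Nat.lt_of_lt_of_le Nat.zero_lt_one hD
  set A : ℝ := min (pi1 * (alpha1 + beta1 / D)) (pi2 * (alpha2 + beta2 / D)) with hA
  set m : ℝ := min (pi1 * beta1) (pi2 * beta2) with hm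
  have hfx : ∀ (pis alphas betas x : ℝ), f D pis alphas betas x
      = x * (pis * (alphas + betas / D)) + (1 - x) * (pis * betas / D) := by
    intro pis alphas betas x
    unfold f
    field_simp
    ring
  have hM1 : min (f D pi1 alpha1 beta1 1) (f D pi2 alpha2 beta2 1) = A := by
    rw [hA]; congr 1 <;> · unfold f; field_simp
  have hM0 : min (f D pi1 alpha1 beta1 0) (f D pi2 alpha2 beta2 0) = m / D := by
    unfold f
    simp only [mul_zero, zero_add]
    rw [hm, min_div_div_right hD0.le]
  constructor
  · have hple : ∀ i, p i ≤ 1 := by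
      intro i
      rw [← hsum]
      exact Finset.single_le_sum (fun j _ => hp j) (Finset.mem_univ i)
    have key : ∀ i, p i * A + (1 - p i) * (m / D)
        ≤ min (f D pi1 alpha1 beta1 (p i)) (f D pi2 alpha2 beta2 (p i)) := by
      intro i
      have h1m : (0:ℝ) ≤ 1 - p i := by linarith [hple i]
      apply le_min
      · rw [hfx]
        exact add_le_add
          (mul_le_mul_of_nonneg_left (min_le_left _ _) (hp i))
          (mul_le_mul_of_nonneg_left ((div_le_div_iff_of_pos_right hD0).mpr (min_le_left _ _)) h1m)
      · rw [hfx]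
        exact add_le_add
          (mul_le_mul_of_nonneg_left (min_le_right _ _) (hp i))
          (mul_le_mul_of_nonneg_left ((div_le_div_iff_of_pos_right hD0).mpr (min_le_right _ _)) h1m)
    have hsum2 : ∑ i, (p i * A + (1 - p i) * (m / D))
        = A + ((D:ℝ) - 1) / D * m := by
      rw [Finset.sum_add_distrib, ← Finset.sum_mul, hsum, ← Finset.sum_mul,
        Finset.sum_sub_distrib, hsum]
      simp only [Finset.sum_const, Finset.card_univ, Fintype.card_fin, nsmul_eq_mul, mul_one]
      field_simp
    unfold Pe
    have : ∑ i, (p i * A + (1 - p i) * (m / (D:ℝ))) ≤ ∑ i, min (f D pi1 alpha1 beta1 (p i)) (f D pi2 alpha2 beta2 (p i)) := Finset.sum_le_sum (fun i _ => key i)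
    rw [hsum2] at this
    linarith
  · intro j
    unfold Pe
    have : ∀ i : Fin D,
        min (f D pi1 alpha1 beta1 (if i = j then (1:ℝ) else 0))
          (f D pi2 alpha2 beta2 (if i = j then (1:ℝ) else 0))
        = (if i = j then A - m / D else 0) + m / D := by
      intro i
      by_cases h : i = j <;> simp [h, hM1, hM0]
    rw [Finset.sum_congr rfl (fun i _ => this i), Finset.sum_add_distrib,
      Finset.sum_ite_eq' Finset.univ j]
    simp only [Finset.mem_univ, if_true, Finset.sum_const, Finset.card_univ,
      Fintype.card_fin, nsmul_eq_mul]
    have : (D:ℝ) * (m / D) = m := by field_simp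
    rw [this]
    field_simp
    ring
end

section
/- (Two-value reduction lemma, key step of Theorem 5.) Fix an integer D ≥ 1 and reals ᾱ, β̄, π₁, π₂, α₁, α₂, β₁, β₂ ≥ 0. For every probability vector p on Fin D there exists a probability vector q on Fin D whose range {q i : i ∈ Fin D} has at most two elements, such that ∑_{i ∈ Fin D} φ(ᾱ·q i + β̄/D) ≥ ∑_{i ∈ Fin D} φ(ᾱ·p i + β̄/D) and ∑_{i ∈ Fin D} min(f₁(q i), f₂(q i)) ≤ ∑_{i ∈ Fin D} min(f₁(p i), f₂(p i)). -/
open Finset Set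

section Averaging

variable {ι : Type*} {s : Set ℝ} {g : ℝ → ℝ} {U : Finset ι} {p : ι → ℝ}

noncomputable def avg (U : Finset ι) (p : ι → ℝ) : ℝ := (∑ i ∈ U, p i) / #U

theorem avg_nonneg (hp : ∀ i, 0 ≤ p i) : 0 ≤ avg U p :=
  div_nonneg (sum_nonneg fun i _ => hp i) (Nat.cast_nonneg _)

theorem card_mul_avg (U : Finset ι) (p : ι → ℝ) : #U * avg U p = ∑ i ∈ U, p i := by
  rcases U.eq_empty_or_nonempty with rfl | hU
  · simp
  · rw [avg, mul_div_cancel₀ _ (Nat.cast_ne_zero.mpr hU.card_ne_zero)]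

theorem ConvexOn.card_mul_map_avg_le (hg : ConvexOn ℝ s g) (hp : ∀ i ∈ U, p i ∈ s) :
    #U * g (avg U p) ≤ ∑ i ∈ U, g (p i) := by
  rcases U.eq_empty_or_nonempty with rfl | hU
  · simp
  have hcard : (0 : ℝ) < #U := by exact_mod_cast hU.card_pos
  have jensen := hg.map_sum_le (t := U) (w := fun _ => (#U : ℝ)⁻¹)
    (fun _ _ => inv_nonneg.mpr hcard.le) (by simp [hcard.ne']) hp
  rw [← smul_sum, ← smul_sum, smul_eq_mul, smul_eq_mul, inv_mul_eq_div, ← avg] at jensen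
  rwa [le_inv_mul_iff₀ hcard] at jensen

theorem ConcaveOn.sum_le_card_mul_map_avg (hg : ConcaveOn ℝ s g) (hp : ∀ i ∈ U, p i ∈ s) :
    ∑ i ∈ U, g (p i) ≤ #U * g (avg U p) := by
  simpa [sum_neg_distrib] using hg.neg.card_mul_map_avg_le hp

variable [Fintype ι] [DecidableEq ι]

noncomputable def blockAvg (S : Finset ι) (p : ι → ℝ) (i : ι) : ℝ :=
  if i ∈ S then avg S p else avg Sᶜ p

theorem blockAvg_eq_or (S : Finset ι) (p : ι → ℝ) (i : ι) :
    blockAvg S p i = avg S p ∨ blockAvg S p i = avg Sᶜ p := by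
  unfold blockAvg
  split_ifs <;> simp

theorem sum_comp_blockAvg (S : Finset ι) (p : ι → ℝ) (g : ℝ → ℝ) :
    ∑ i, g (blockAvg S p i) = #S * g (avg S p) + #Sᶜ * g (avg Sᶜ p) := by
  have on_S : ∀ i ∈ S, g (blockAvg S p i) = g (avg S p) := fun i hi => by
    rw [blockAvg, if_pos hi]
  have on_compl : ∀ i ∈ Sᶜ, g (blockAvg S p i) = g (avg Sᶜ p) := fun i hi => by
    rw [blockAvg, if_neg (mem_compl.mp hi)]
  rw [← sum_add_sum_compl S, sum_congr rfl on_S, sum_congr rfl on_compl, sum_const, sum_const,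
    nsmul_eq_mul, nsmul_eq_mul]

theorem sum_blockAvg (S : Finset ι) (p : ι → ℝ) : ∑ i, blockAvg S p i = ∑ i, p i := by
  calc ∑ i, blockAvg S p i = #S * avg S p + #Sᶜ * avg Sᶜ p := sum_comp_blockAvg S p id
    _ = ∑ i, p i := by rw [card_mul_avg, card_mul_avg, sum_add_sum_compl]

theorem ConcaveOn.sum_le_sum_comp_blockAvg (hg : ConcaveOn ℝ s g) (S : Finset ι)
    (hp : ∀ i, p i ∈ s) : ∑ i, g (p i) ≤ ∑ i, g (blockAvg S p i) := by
  rw [sum_comp_blockAvg, ← sum_add_sum_compl S]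
  exact add_le_add (hg.sum_le_card_mul_map_avg fun i _ => hp i)
    (hg.sum_le_card_mul_map_avg fun i _ => hp i)

theorem sum_min_comp_blockAvg_le {g₁ g₂ : ℝ → ℝ} (hg₁ : ConvexOn ℝ s g₁)
    (hg₂ : ConvexOn ℝ s g₂) (hp : ∀ i, p i ∈ s) :
    ∑ i, min (g₁ (blockAvg {i | g₁ (p i) ≤ g₂ (p i)} p i))
        (g₂ (blockAvg {i | g₁ (p i) ≤ g₂ (p i)} p i)) ≤
      ∑ i, min (g₁ (p i)) (g₂ (p i)) := by
  set S : Finset ι := {i | g₁ (p i) ≤ g₂ (p i)}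
  have on_S : ∑ i ∈ S, min (g₁ (p i)) (g₂ (p i)) = ∑ i ∈ S, g₁ (p i) :=
    sum_congr rfl fun i hi => min_eq_left (mem_filter.mp hi).2
  have on_compl : ∑ i ∈ Sᶜ, min (g₁ (p i)) (g₂ (p i)) = ∑ i ∈ Sᶜ, g₂ (p i) :=
    sum_congr rfl fun i hi => min_eq_right (not_le.mp (by simpa [S] using hi)).le
  rw [sum_comp_blockAvg S p fun x => min (g₁ x) (g₂ x), ← sum_add_sum_compl S, on_S, on_compl]
  gcongr
  · exact (mul_le_mul_of_nonneg_left (min_le_left _ _) (Nat.cast_nonneg _)).trans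
      (hg₁.card_mul_map_avg_le fun i _ => hp i)
  · exact (mul_le_mul_of_nonneg_left (min_le_right _ _) (Nat.cast_nonneg _)).trans
      (hg₂.card_mul_map_avg_le fun i _ => hp i)

end Averaging

theorem concaveOn_phi : ConcaveOn ℝ (Ici 0) phi := by
  have hphi : phi = (Real.log 2)⁻¹ • Real.negMulLog := by
    ext x
    simp only [phi, Real.logb, Real.negMulLog, Pi.smul_apply, smul_eq_mul]
    ring
  rw [hphi]
  exact Real.concaveOn_negMulLog.smul (by positivity)

theorem concaveOn_phi_mul_add {a c : ℝ} (ha : 0 ≤ a) (hc : 0 ≤ c) :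
    ConcaveOn ℝ (Ici 0) fun x => phi (a * x + c) := by
  have hcomp := concaveOn_phi.comp_affineMap (a • AffineMap.id ℝ ℝ + AffineMap.const ℝ ℝ c)
  refine (hcomp.subset (fun x (hx : 0 ≤ x) => ?_) (convex_Ici 0)).congr fun x _ => ?_
  · show 0 ≤ a * x + c
    positivity
  · simp

theorem convexOn_f (D : ℕ) (pis alphas betas : ℝ) : ConvexOn ℝ univ (f D pis alphas betas) :=
  ((LinearMap.mul ℝ ℝ (pis * alphas)).convexOn convex_univ).add_const _

theorem stmt_10_general (D : ℕ)
    (abar bbar pi1 pi2 alpha1 alpha2 beta1 beta2 : ℝ)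
    (ha : 0 ≤ abar) (hb : 0 ≤ bbar)
    (p : Fin D → ℝ) (hp : ∀ i, 0 ≤ p i) (hsum : ∑ i, p i = 1) :
    ∃ q : Fin D → ℝ, (∀ i, 0 ≤ q i) ∧ (∑ i, q i = 1) ∧
      (∃ v w : ℝ, ∀ i, q i = v ∨ q i = w) ∧
      (∑ i, phi (abar * q i + bbar / D)) ≥ (∑ i, phi (abar * p i + bbar / D)) ∧
      (∑ i, min (f D pi1 alpha1 beta1 (q i)) (f D pi2 alpha2 beta2 (q i))) ≤
        (∑ i, min (f D pi1 alpha1 beta1 (p i)) (f D pi2 alpha2 beta2 (p i))) := by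
  set S : Finset (Fin D) := {i | f D pi1 alpha1 beta1 (p i) ≤ f D pi2 alpha2 beta2 (p i)}
  refine ⟨blockAvg S p, fun i => ?_, (sum_blockAvg S p).trans hsum,
    ⟨_, _, blockAvg_eq_or S p⟩, ?_, ?_⟩
  · rcases blockAvg_eq_or S p i with h | h <;> rw [h] <;> exact avg_nonneg hp
  · exact (concaveOn_phi_mul_add ha (by positivity)).sum_le_sum_comp_blockAvg S hp
  · exact sum_min_comp_blockAvg_le (convexOn_f ..) (convexOn_f ..) fun i => mem_univ (p i)

/-- Two-value reduction lemma: for every probability vector `p` on `Fin D` there is a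
probability vector `q` taking at most two distinct values such that the rate sum does
not decrease and the detection sum does not increase. -/
theorem stmt_10 (D : ℕ) (hD : 1 ≤ D)
    (abar bbar pi1 pi2 alpha1 alpha2 beta1 beta2 : ℝ)
    (ha : 0 ≤ abar) (hb : 0 ≤ bbar)
    (hpi1 : 0 ≤ pi1) (hpi2 : 0 ≤ pi2) (halpha1 : 0 ≤ alpha1) (halpha2 : 0 ≤ alpha2)
    (hbeta1 : 0 ≤ beta1) (hbeta2 : 0 ≤ beta2)
    (p : Fin D → ℝ) (hp : ∀ i, 0 ≤ p i) (hsum : ∑ i, p i = 1) :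
    ∃ q : Fin D → ℝ, (∀ i, 0 ≤ q i) ∧ (∑ i, q i = 1) ∧
      (∃ v w : ℝ, ∀ i, q i = v ∨ q i = w) ∧
      (∑ i, phi (abar * q i + bbar / D)) ≥ (∑ i, phi (abar * p i + bbar / D)) ∧
      (∑ i, min (f D pi1 alpha1 beta1 (q i)) (f D pi2 alpha2 beta2 (q i))) ≤
        (∑ i, min (f D pi1 alpha1 beta1 (p i)) (f D pi2 alpha2 beta2 (p i))) :=
  stmt_10_general D abar bbar pi1 pi2 alpha1 alpha2 beta1 beta2 ha hb p hp hsum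
end

section
/- (Mutual information of the induced classical channel equals the rate function.) Fix an integer D ≥ 1 and reals ᾱ ≥ 0, β̄ > 0. For a probability vector p on Fin D, let q(y) = ᾱ·p y + β̄/D for y ∈ Fin D (so q(y) > 0 for all y). Then ∑_{x ∈ Fin D} p x · [ (ᾱ + β̄/D)·log₂((ᾱ + β̄/D)/q(x)) + ∑_{y ∈ Fin D, y ≠ x} (β̄/D)·log₂((β̄/D)/q(y)) ] = R̄(p). -/
/-- Mutual information of the induced classical channel equals the rate function:
with `q(y) = ᾱ·p y + β̄/D`,
`∑ x, p x · [(ᾱ+β̄/D)·log₂((ᾱ+β̄/D)/q x) + ∑_{y ≠ x} (β̄/D)·log₂((β̄/D)/q y)] = R̄(p)`. -/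
theorem stmt_12 (D : ℕ) (hD : 1 ≤ D) (abar bbar : ℝ) (ha : 0 ≤ abar) (hb : 0 < bbar)
    (p : Fin D → ℝ) (hp : ∀ i, 0 ≤ p i) (hsum : ∑ i, p i = 1) :
    ∑ x, p x * ((abar + bbar / D) * Real.logb 2 ((abar + bbar / D) / (abar * p x + bbar / D))
        + ∑ y ∈ Finset.univ.filter (fun y => y ≠ x),
            (bbar / D) * Real.logb 2 ((bbar / D) / (abar * p y + bbar / D)))
      = Rbar D abar bbar p := by
  have hD0 : (0:ℝ) < (D:ℝ) := by exact_mod_cast Nat.lt_of_lt_of_le Nat.zero_lt_one hD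
  set c : ℝ := bbar / (D:ℝ) with hcdef
  have hc : 0 < c := div_pos hb hD0
  have hq : ∀ x : Fin D, 0 < abar * p x + c := fun x =>
    add_pos_of_nonneg_of_pos (mul_nonneg ha (hp x)) hc
  have hA : 0 < abar + c := add_pos_of_nonneg_of_pos ha hc
  set L : Fin D → ℝ := fun x => Real.logb 2 (abar * p x + c) with hL
  set La : ℝ := Real.logb 2 (abar + c) with hLa
  set Lc : ℝ := Real.logb 2 c with hLc
  set S : ℝ := ∑ x, L x with hS
  have step1 : ∀ x, Real.logb 2 ((abar + c) / (abar * p x + c)) = La - L x := fun x =>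
    Real.logb_div hA.ne' (hq x).ne'
  have step2 : ∀ x, Real.logb 2 (c / (abar * p x + c)) = Lc - L x := fun x =>
    Real.logb_div hc.ne' (hq x).ne'
  have inner : ∀ x : Fin D,
      (∑ y ∈ Finset.univ.filter (fun y => y ≠ x), c * Real.logb 2 (c / (abar * p y + c)))
      = (D : ℝ) * (c * Lc) - c * S - c * (Lc - L x) := by
    intro x
    have h1 : ∀ y, c * Real.logb 2 (c / (abar * p y + c)) = c * (Lc - L y) := by
      intro y; rw [step2]
    simp only [h1, Finset.filter_ne', Finset.sum_erase_eq_sub (Finset.mem_univ x)]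
    rw [Finset.sum_congr rfl (fun y _ => mul_sub c Lc (L y)), Finset.sum_sub_distrib,
      Finset.sum_const, ← Finset.mul_sum, ← hS, Finset.card_univ, Fintype.card_fin]
    ring
  have hlhs : (∑ x, p x * ((abar + c) * Real.logb 2 ((abar + c) / (abar * p x + c))
        + ∑ y ∈ Finset.univ.filter (fun y => y ≠ x),
            c * Real.logb 2 (c / (abar * p y + c))))
      = ∑ x, (p x * ((abar + c) * La + (D : ℝ) * (c * Lc) - c * S - c * Lc)
          + (-abar) * (p x * L x)) := by
    refine Finset.sum_congr rfl (fun x _ => ?_)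
    rw [step1, inner x]
    ring
  rw [hlhs, Finset.sum_add_distrib, ← Finset.sum_mul, ← Finset.mul_sum, hsum]
  have hphi : ∀ x : Fin D, phi (abar * p x + c) = -abar * (p x * L x) + (-c) * L x := by
    intro x; simp only [phi, hL]; ring
  rw [Rbar]
  simp only [← hcdef, hphi, ← hLa, ← hLc]
  rw [Finset.sum_add_distrib, ← Finset.mul_sum, ← Finset.mul_sum, ← hS]
  ring
end
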